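/- Let p > 3 and g(t) = f₁(t)^{p+1}/t. Then the map t ↦ g(t)/t is strictly increasing on (0,∞). -/

import Mathlib

open Real Filter Set

/-- `Fk κ t = ∫₀ᵗ √(1 + 2κ s²) ds`. -/
noncomputable def Fk (κ t : ℝ) : ℝ := ∫ s in (0:ℝ)..t, Real.sqrt (1 + 2*κ*s^2)

/-- `f` is the inverse of `Fk κ` on `[0,∞)`. -/
def IsInvF (κ : ℝ) (f : ℝ → ℝ) : Prop :=
  (∀ s, 0 ≤ s → f (Fk κ s) = s) ∧ ∀ t, 0 ≤ t → 0 ≤ f t ∧ Fk κ (f t) = t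

/-- The derivative formula `f_κ'(t) = (1 + 2κ f_κ(t)²)^{-1/2}`. -/
noncomputable def fd (κ : ℝ) (f : ℝ → ℝ) (t : ℝ) : ℝ :=
  1 / Real.sqrt (1 + 2*κ*(f t)^2)

/-!
Substituting `s = f₁ t`, i.e. `t = F₁ s`, the function becomes `s ^ (p + 1) / F₁ s ^ 2`, and `f₁` is
strictly increasing, so it suffices that this is strictly increasing in `s > 0`. Writing it as
`s ^ (p - 3) * (s ^ 2 / F₁ s) ^ 2`, this reduces (for `p ≥ 3`) to the monotonicity of `s ^ 2 / F₁ s`,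
whose derivative has the sign of `2 F₁ s - s F₁' s`. That quantity vanishes at `0` and has
derivative `F₁' s - s F₁'' s = 1 / √(1 + 2 s²) > 0`.
-/

variable {κ : ℝ}

theorem hasDerivAt_Fk (κ x : ℝ) : HasDerivAt (Fk κ) (√(1 + 2 * κ * x ^ 2)) x :=
  ((by fun_prop : Continuous fun s : ℝ => √(1 + 2 * κ * s ^ 2)).integral_hasStrictDerivAt
    0 x).hasDerivAt

theorem Fk_zero (κ : ℝ) : Fk κ 0 = 0 := intervalIntegral.integral_same

theorem sqrt_one_add_two_mul_sq_pos (hκ : 0 ≤ κ) (x : ℝ) : 0 < √(1 + 2 * κ * x ^ 2) :=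
  Real.sqrt_pos.mpr (by positivity)

theorem strictMono_Fk (hκ : 0 ≤ κ) : StrictMono (Fk κ) :=
  strictMono_of_hasDerivAt_pos (hasDerivAt_Fk κ) (sqrt_one_add_two_mul_sq_pos hκ)

theorem Fk_pos (hκ : 0 ≤ κ) {x : ℝ} (hx : 0 < x) : 0 < Fk κ x :=
  Fk_zero κ ▸ strictMono_Fk hκ hx

theorem mul_sqrt_lt_two_mul_Fk (hκ : 0 ≤ κ) {x : ℝ} (hx : 0 < x) :
    x * √(1 + 2 * κ * x ^ 2) < 2 * Fk κ x := by
  have hG : ∀ s, HasDerivAt (fun s => 2 * Fk κ s - s * √(1 + 2 * κ * s ^ 2))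
      (1 / √(1 + 2 * κ * s ^ 2)) s := fun s => by
    have hu : 0 < 1 + 2 * κ * s ^ 2 := by positivity
    have hsq := Real.sq_sqrt hu.le
    refine (((hasDerivAt_Fk κ s).const_mul 2).sub ((hasDerivAt_id' s).mul
      ((((hasDerivAt_pow 2 s).const_mul (2 * κ)).const_add 1).sqrt hu.ne'))).congr_deriv ?_
    field_simp
    rw [hsq]
    norm_num
    ring
  have := strictMono_of_hasDerivAt_pos hG
    (fun s => one_div_pos.mpr (sqrt_one_add_two_mul_sq_pos hκ s)) hx
  simp only [Fk_zero] at this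
  linarith

theorem strictMonoOn_sq_div_Fk (hκ : 0 ≤ κ) :
    StrictMonoOn (fun s => s ^ 2 / Fk κ s) (Ioi 0) := by
  refine strictMonoOn_of_hasDerivWithinAt_pos (convex_Ioi 0)
    (f' := fun s => (2 * s * Fk κ s - s ^ 2 * √(1 + 2 * κ * s ^ 2)) / Fk κ s ^ 2)
    (fun s hs => ?_) (fun s hs => ?_) (fun s hs => ?_)
  · exact ((hasDerivAt_pow 2 s).div (hasDerivAt_Fk κ s)
      (Fk_pos hκ hs).ne').continuousAt.continuousWithinAt
  · rw [interior_Ioi] at hs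
    refine (((hasDerivAt_pow 2 s).div (hasDerivAt_Fk κ s)
      (Fk_pos hκ hs).ne').congr_deriv ?_).hasDerivWithinAt
    ring
  · rw [interior_Ioi, mem_Ioi] at hs
    have hkey := mul_sqrt_lt_two_mul_Fk hκ hs
    exact div_pos (by nlinarith) (pow_pos (Fk_pos hκ hs) 2)

theorem strictMonoOn_rpow_div_Fk_sq (hκ : 0 ≤ κ) {p : ℝ} (hp : 3 ≤ p) :
    StrictMonoOn (fun s => s ^ (p + 1) / Fk κ s ^ 2) (Ioi 0) := by
  have hsplit : EqOn (fun s => s ^ (p - 3) * (s ^ 2 / Fk κ s) ^ 2)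
      (fun s => s ^ (p + 1) / Fk κ s ^ 2) (Ioi 0) := fun s (hs : 0 < s) => by
    dsimp only
    rw [show p + 1 = p - 3 + 4 by ring, Real.rpow_add hs, show (4:ℝ) = (4:ℕ) by norm_num,
      Real.rpow_natCast]
    ring
  refine StrictMonoOn.congr (fun a (ha : 0 < a) b (hb : 0 < b) hab => ?_) hsplit
  have hq := strictMonoOn_sq_div_Fk hκ ha hb hab
  have hqa : 0 < a ^ 2 / Fk κ a := div_pos (by positivity) (Fk_pos hκ ha)
  calc a ^ (p - 3) * (a ^ 2 / Fk κ a) ^ 2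
      ≤ b ^ (p - 3) * (a ^ 2 / Fk κ a) ^ 2 := by gcongr
    _ < b ^ (p - 3) * (b ^ 2 / Fk κ b) ^ 2 := by gcongr

theorem IsInvF.strictMonoOn {f : ℝ → ℝ} (hf : IsInvF κ f) (hκ : 0 ≤ κ) :
    StrictMonoOn f (Ici 0) := fun t₁ ht₁ t₂ ht₂ h =>
  (strictMono_Fk hκ).lt_iff_lt.mp (by rwa [(hf.2 t₁ ht₁).2, (hf.2 t₂ ht₂).2])

theorem IsInvF.mapsTo_Ioi {f : ℝ → ℝ} (hf : IsInvF κ f) (hκ : 0 ≤ κ) :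
    MapsTo f (Ioi 0) (Ioi 0) := fun t (ht : 0 < t) =>
  (strictMono_Fk hκ).lt_iff_lt.mp (by rwa [Fk_zero, (hf.2 t ht.le).2])

theorem stmt_17 (p : ℝ) (hp : 3 < p) (f₁ : ℝ → ℝ) (hf₁ : IsInvF 1 f₁) :
    StrictMonoOn (fun t => ((f₁ t) ^ (p + 1) / t) / t) (Set.Ioi 0) := by
  refine ((strictMonoOn_rpow_div_Fk_sq zero_le_one hp.le).comp
    ((hf₁.strictMonoOn zero_le_one).mono Ioi_subset_Ici_self) (hf₁.mapsTo_Ioi zero_le_one)).congr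
    fun t (ht : 0 < t) => ?_
  simp only [Function.comp, (hf₁.2 t ht.le).2]
  ring
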